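/- arXiv:1805.12339 — 5 statements merged into one kernel-verified Lean document; each statement's English description precedes it below -/
import Mathlib

section
/- Let r ≥ 2 and k ≥ 1 be integers, let L ⊆ F_∞^r be a strongly discrete subgroup, let v ∈ F_∞^r, and let ω ∈ K^r have coordinates ω_1,…,ω_r linearly independent over F_∞. Then xω ≠ 0 for every nonzero x ∈ F_∞^r, and the family ((xω)^{−k})_{x ∈ (v+L)∖{0}} is summable in K; in particular the Eisenstein series value E_{k,v+L}(ω) := Σ_{x∈v+L, x≠0} (xω)^{−k} is a well-defined element of K. (Proposition 13.1.) -/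
open scoped BigOperators

/-- The pairing of a row vector `x` with a column vector `ω`: `xω = ∑ i, x i * ω i`. -/
noncomputable def rvPair {K : Type*} [Field K] {r : ℕ} (x ω : Fin r → K) : K :=
  ∑ i, x i * ω i

/-- A subset `M` of a seminormed additive group is strongly discrete if `M ∩ B` is finite
for every bounded subset `B`. -/
def StronglyDiscrete {E : Type*} [SeminormedAddCommGroup E] (M : Set E) : Prop :=
  ∀ B : Set E, Bornology.IsBounded B → (M ∩ B).Finite

/-- The coset `v + L`. -/
def cosetOf {G : Type*} [AddGroup G] (v : G) (L : Set G) : Set G := {x | x - v ∈ L}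

/-!
In a complete nonarchimedean field a family is summable as soon as its terms tend to zero, so it
suffices that only finitely many `x ∈ v + L` satisfy `‖xω‖ ≤ C`. If the absolute value is trivial
on `F_∞`, then `F_∞^r` is bounded. Otherwise `F_∞` is a complete nontrivially normed field, and
`x ↦ xω` is an injective linear map on the finite-dimensional space `F_∞^r`, hence antilipschitz.
Either way `{x ∈ F_∞^r | ‖xω‖ ≤ C}` is bounded, and strong discreteness of `L` leaves only finitely
many points of `v + L` in it.
-/

open Filter Bornology Pointwise

theorem StronglyDiscrete.finite_cosetOf_inter {E : Type*} [SeminormedAddCommGroup E]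
    {L : Set E} (hL : StronglyDiscrete L) (v : E) {B : Set E} (hB : IsBounded B) :
    (cosetOf v L ∩ B).Finite := by
  have hfin : (L ∩ (-v +ᵥ B)).Finite := hL _ (hB.vadd (-v))
  refine (hfin.preimage (sub_left_injective (b := v)).injOn).subset ?_
  rintro x ⟨hxL, hxB⟩
  exact ⟨hxL, x, hxB, by simp [sub_eq_neg_add]⟩

theorem LinearIndependent.exists_norm_le_mul_norm_sum_smul {𝕜 E ι : Type*}
    [NontriviallyNormedField 𝕜] [CompleteSpace 𝕜] [NormedAddCommGroup E] [NormedSpace 𝕜 E]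
    [Fintype ι] {ω : ι → E} (hω : LinearIndependent 𝕜 ω) :
    ∃ A : NNReal, ∀ y : ι → 𝕜, ‖y‖ ≤ A * ‖∑ i, y i • ω i‖ := by
  rw [linearIndependent_iff_injective_fintypeLinearCombination] at hω
  obtain ⟨A, -, hA⟩ := (Fintype.linearCombination 𝕜 ω).exists_antilipschitzWith
    (LinearMap.ker_eq_bot.mpr hω)
  exact ⟨A, fun y => by
    simpa only [Fintype.linearCombination_apply] using hA.le_mul_norm (map_zero _) y⟩

instance Subfield.toNormedSpace {K : Type*} [NormedField K] (F : Subfield K) :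
    NormedSpace F K where
  norm_smul_le a x := (norm_mul (a : K) x).le

theorem summable_inv_pow_of_finite_norm_le {K ι : Type*} [NormedField K] [IsUltrametricDist K]
    [CompleteSpace K] {g : ι → K} {k : ℕ} (hk : 1 ≤ k) (hg : ∀ C, {i | ‖g i‖ ≤ C}.Finite) :
    Summable fun i => (g i ^ k)⁻¹ := by
  have hg_cobounded : Tendsto g cofinite (cobounded K) := by
    rw [← comap_norm_atTop, tendsto_comap_iff, tendsto_atTop]
    exact fun C => (hg C).subset fun i hi => (by simpa using hi : ‖g i‖ < C).le
  have h := (tendsto_inv₀_cobounded.comp hg_cobounded).pow k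
  rw [zero_pow (by omega)] at h
  simp only [Function.comp_def, ← inv_pow] at h ⊢
  exact NonarchimedeanAddGroup.summable_of_tendsto_cofinite_zero h

theorem isBounded_setOf_norm_rvPair_le {K : Type*} [NormedField K] [CompleteSpace K]
    {F : Subfield K} (hF : IsClosed (F : Set K)) {r : ℕ} {ω : Fin r → K}
    (hω : ∀ x : Fin r → K, (∀ i, x i ∈ F) → rvPair x ω = 0 → x = 0) (C : ℝ) :
    IsBounded {x : Fin r → K | (∀ i, x i ∈ F) ∧ ‖rvPair x ω‖ ≤ C} := by
  by_cases hF_nontrivial : ∃ a : F, a ≠ 0 ∧ ‖a‖ ≠ 1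
  · let := NontriviallyNormedField.ofNormNeOne hF_nontrivial
    have : CompleteSpace F := hF.completeSpace_coe
    have hind : LinearIndependent F ω := Fintype.linearIndependent_iff.mpr fun g hg i =>
      Subtype.ext (congrFun (hω (fun i => g i) (fun i => (g i).2) hg) i)
    obtain ⟨A, hA⟩ := hind.exists_norm_le_mul_norm_sum_smul
    refine (Metric.isBounded_closedBall (x := 0) (r := A * C)).subset fun x ⟨hxF, hxC⟩ => ?_
    rw [mem_closedBall_zero_iff]
    calc ‖x‖ ≤ A * ‖rvPair x ω‖ := hA fun i => ⟨x i, hxF i⟩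
      _ ≤ A * C := by gcongr
  · push Not at hF_nontrivial
    refine (Metric.isBounded_closedBall (x := 0) (r := 1)).subset fun x ⟨hxF, _⟩ => ?_
    rw [mem_closedBall_zero_iff, pi_norm_le_iff_of_nonneg zero_le_one]
    intro i
    by_cases hxi : x i = 0
    · simp [hxi]
    · exact (hF_nontrivial ⟨x i, hxF i⟩ (ne_of_apply_ne Subtype.val hxi)).le

theorem finite_setOf_mem_cosetOf_norm_rvPair_le {K : Type*} [NormedField K] [CompleteSpace K]
    {F : Subfield K} (hF : IsClosed (F : Set K)) {r : ℕ} {L : AddSubgroup (Fin r → K)}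
    (hLF : ∀ x ∈ L, ∀ i, x i ∈ F) (hL : StronglyDiscrete (L : Set (Fin r → K)))
    {v : Fin r → K} (hv : ∀ i, v i ∈ F) {ω : Fin r → K}
    (hω : ∀ x : Fin r → K, (∀ i, x i ∈ F) → rvPair x ω = 0 → x = 0) (C : ℝ) :
    {x | x ∈ cosetOf v (L : Set (Fin r → K)) ∧ ‖rvPair x ω‖ ≤ C}.Finite := by
  refine (hL.finite_cosetOf_inter v (isBounded_setOf_norm_rvPair_le hF hω C)).subset ?_
  rintro x ⟨hxv, hxC⟩
  refine ⟨hxv, fun i => ?_, hxC⟩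
  simpa using add_mem (hLF _ hxv i) (hv i)

theorem eisenstein_summable_general
    (K : Type*) [NontriviallyNormedField K] [IsUltrametricDist K] [CompleteSpace K]
    (Finf : Subfield K) (hFinfclosed : IsClosed (Finf : Set K))
    (r k : ℕ) (hk : 1 ≤ k)
    (L : AddSubgroup (Fin r → K)) (hLF : ∀ x ∈ L, ∀ i, x i ∈ Finf)
    (hLdisc : StronglyDiscrete (L : Set (Fin r → K)))
    (v : Fin r → K) (hv : ∀ i, v i ∈ Finf)
    (ω : Fin r → K)
    (hω : ∀ x : Fin r → K, (∀ i, x i ∈ Finf) → rvPair x ω = 0 → x = 0) :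
    (∀ x : Fin r → K, (∀ i, x i ∈ Finf) → x ≠ 0 → rvPair x ω ≠ 0) ∧
    Summable (fun x : {x : Fin r → K // x ∈ cosetOf v (L : Set (Fin r → K)) ∧ x ≠ 0} =>
      ((rvPair (x : Fin r → K) ω) ^ k)⁻¹) := by
  refine ⟨fun x hx hx0 h => hx0 (hω x hx h), summable_inv_pow_of_finite_norm_le hk fun C => ?_⟩
  exact ((finite_setOf_mem_cosetOf_norm_rvPair_le hFinfclosed hLF hLdisc hv hω C).preimage
    Subtype.val_injective.injOn).subset fun x hx => ⟨x.2.1, hx⟩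

/-- the Eisenstein series `E_{k,v+L}(ω)` is well defined: each `xω ≠ 0` for
nonzero `x ∈ F_∞^r` and the family `((xω)^{-k})_{x ∈ (v+L)∖{0}}` is summable. -/
theorem eisenstein_summable
    (K : Type*) [NontriviallyNormedField K] [IsUltrametricDist K] [CompleteSpace K]
    [IsAlgClosed K]
    (Finf : Subfield K) (hFinfclosed : IsClosed (Finf : Set K))
    (hFinfloc : LocallyCompactSpace Finf)
    (r k : ℕ) (hr : 2 ≤ r) (hk : 1 ≤ k)
    (L : AddSubgroup (Fin r → K)) (hLF : ∀ x ∈ L, ∀ i, x i ∈ Finf)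
    (hLdisc : StronglyDiscrete (L : Set (Fin r → K)))
    (v : Fin r → K) (hv : ∀ i, v i ∈ Finf)
    (ω : Fin r → K)
    (hω : ∀ x : Fin r → K, (∀ i, x i ∈ Finf) → rvPair x ω = 0 → x = 0) :
    (∀ x : Fin r → K, (∀ i, x i ∈ Finf) → x ≠ 0 → rvPair x ω ≠ 0) ∧
    Summable (fun x : {x : Fin r → K // x ∈ cosetOf v (L : Set (Fin r → K)) ∧ x ≠ 0} =>
      ((rvPair (x : Fin r → K) ω) ^ k)⁻¹) :=
  eisenstein_summable_general K Finf hFinfclosed r k hk L hLF hLdisc v hv ω hω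
end

section
/- With notation as in the context: (i) for λ′ ∈ F^{r−1}, one has (v+L)·u(λ′) = v+L if and only if λ′ ∈ Λ′; (ii) Λ′ is a finitely generated A-submodule of F^{r−1} that spans F^{r−1} over F; (iii) for every nonzero x_1 ∈ v_1 + L_1 one has x_1Λ′ ⊆ L′ and the quotient group L′/x_1Λ′ is finite. (Lemma 13.7.) -/
open scoped BigOperators

/-- The first-component kernel `L′ = {x′ : (0,x′) ∈ L}`. -/
def LprimeSet {A F : Type*} [CommRing A] [Field F] [Algebra A F] {m : ℕ}
    (L : Submodule A (F × (Fin m → F))) : Set (Fin m → F) :=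
  {x' | ((0 : F), x') ∈ L}

/-- The first-component image `L₁ = {x₁ : (x₁,x′) ∈ L for some x′}`. -/
def LoneSet {A F : Type*} [CommRing A] [Field F] [Algebra A F] {m : ℕ}
    (L : Submodule A (F × (Fin m → F))) : Set F :=
  {x1 | ∃ x', (x1, x') ∈ L}

/-- `Λ′ = {λ′ : x₁λ′ ∈ L′ for all x₁ ∈ v₁ + L₁}`. -/
def LambdaPrimeSet {A F : Type*} [CommRing A] [Field F] [Algebra A F] {m : ℕ}
    (L : Submodule A (F × (Fin m → F))) (v : F × (Fin m → F)) : Set (Fin m → F) :=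
  {l' | ∀ x1 : F, x1 - v.1 ∈ LoneSet L → x1 • l' ∈ LprimeSet L}

/-- The unipotent matrix action `(x₁,x′)·u(λ′) = (x₁, x₁λ′ + x′)`. -/
def uAct {F : Type*} [Field F] {m : ℕ} (l' : Fin m → F) (x : F × (Fin m → F)) :
    F × (Fin m → F) :=
  (x.1, x.1 • l' + x.2)

/-!
Write `M` for the `A`-span of `v₁ + L₁` and `N` for `L′`, so that `Λ′ = {λ′ : M • λ′ ⊆ N}`; and
`u(λ′)` moves `x ∈ v + L` by `(0, x₁λ′)`, so it stabilises `v + L` exactly when `λ′ ∈ Λ′`.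
As `M` is finitely generated it has a common denominator: for every `x₁` some `0 ≠ a ∈ A` makes
`a x₁⁻¹ M` integral, whence `a N ⊆ x₁ Λ′ ⊆ N`. This gives that `Λ′` spans (since `N` does) and
that `N / x₁Λ′` is finite (a quotient of `N / aN`, finite as `A / (a)` is). Finally `Λ′` embeds
into `N` via `λ′ ↦ x₀λ′` for a nonzero `x₀ ∈ v₁ + L₁`, which exists because `L₁` spans `F`, so it
is finitely generated since `A` is Noetherian.
-/

open Submodule
open scoped Pointwise

namespace Submodule

variable {A F V : Type*} [CommRing A] [Field F] [Algebra A F] [AddCommGroup V] [Module F V]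
  [Module A V] [IsScalarTower A F V]

def smulColon (M : Submodule A F) (N : Submodule A V) : Submodule A V where
  carrier := {l | ∀ c ∈ M, c • l ∈ N}
  add_mem' ha hb c hc := by rw [smul_add]; exact N.add_mem (ha c hc) (hb c hc)
  zero_mem' c _ := by rw [smul_zero]; exact N.zero_mem
  smul_mem' a l hl c hc := by rw [smul_comm]; exact N.smul_mem a (hl c hc)

variable {M : Submodule A F} {N : Submodule A V}

theorem mem_smulColon_span {s : Set F} {l : V} :
    l ∈ smulColon (span A s) N ↔ ∀ c ∈ s, c • l ∈ N :=
  span_le (p := N.comap ((LinearMap.toSpanSingleton F V l).restrictScalars A))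

theorem fg_smulColon [IsNoetherianRing A] (hN : N.FG) {x : F} (hxM : x ∈ M) (hx : x ≠ 0) :
    (smulColon M N).FG := by
  refine fg_of_fg_map_injective (DistribSMul.toLinearMap A V x) (smul_right_injective V hx)
    (hN.of_le ?_)
  rintro _ ⟨l, hl, rfl⟩
  exact hl x hxM

theorem exists_div_smul_mem_smulColon [IsFractionRing A F] (hM : M.FG) (x : F) :
    ∃ a ∈ nonZeroDivisors A, ∀ z ∈ N, (algebraMap A F a / x) • z ∈ smulColon M N := by
  obtain ⟨a, ha, hint⟩ := FractionalIdeal.isFractional_of_fg (S := nonZeroDivisors A)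
    (hM.map (LinearMap.mulRight A x⁻¹))
  refine ⟨a, ha, fun z hz c hc => ?_⟩
  obtain ⟨b, hb⟩ := hint _ (mem_map_of_mem hc)
  have hcb : c * (algebraMap A F a / x) = algebraMap A F b := by
    rw [hb, Algebra.smul_def, LinearMap.mulRight_apply]; ring
  rw [smul_smul, hcb, algebraMap_smul]
  exact N.smul_mem b hz

theorem span_le_span_smulColon [IsFractionRing A F] (hM : M.FG) :
    span F (N : Set V) ≤ span F (smulColon M N : Set V) := by
  obtain ⟨a, ha, hmem⟩ := exists_div_smul_mem_smulColon (N := N) hM 1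
  have ha' : algebraMap A F a / 1 ≠ 0 := by
    rw [div_one]; exact (IsLocalization.map_units F ⟨a, ha⟩).ne_zero
  exact span_le.2 fun z hz => (smul_mem_iff _ ha').1 (subset_span (hmem z hz))

theorem span_comap_restrictScalars [IsFractionRing A F] {W : Type*} [AddCommGroup W] [Module F W]
    [Module A W] [IsScalarTower A F W] (f : V →ₗ[F] W) (L : Submodule A W) :
    span F (L.comap (f.restrictScalars A)) = (span F L).comap f := by
  refine le_antisymm (span_le.2 fun w hw => subset_span hw) fun w hw => ?_
  obtain ⟨y, hy, z, hwy⟩ := (IsLocalization.mem_span_iff (nonZeroDivisors A)).1 hw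
  rw [span_eq] at hy
  have hzw : (z : A) • w ∈ L.comap (f.restrictScalars A) := by
    show f ((z : A) • w) ∈ L
    rw [LinearMap.map_smul_of_tower, hwy, ← algebraMap_smul F, smul_smul,
      IsLocalization.mul_mk'_eq_mk'_of_mul, mul_one, IsLocalization.mk'_self, one_smul]
    exact hy
  rw [← algebraMap_smul F] at hzw
  exact (smul_mem_iff _ (IsLocalization.map_units F z).ne_zero).1 (subset_span hzw)

end Submodule

theorem Submodule.FG.exists_finset_sub_mem_smul {A V : Type*} [CommRing A] [AddCommGroup V]
    [Module A V] {N : Submodule A V} (hN : N.FG) (a : A) [Finite (A ⧸ Ideal.span {a})] :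
    ∃ T : Finset V, (T : Set V) ⊆ N ∧ ∀ y ∈ N, ∃ t ∈ T, ∃ z ∈ N, y - t = a • z := by
  classical
  have : Module.Finite A N := .of_fg hN
  have : Finite (N ⧸ Ideal.span {a} • (⊤ : Submodule A N)) :=
    finite_quotient_smul _ Module.Finite.fg_top
  have := Fintype.ofFinite (N ⧸ Ideal.span {a} • (⊤ : Submodule A N))
  refine ⟨Finset.univ.image fun q : N ⧸ Ideal.span {a} • (⊤ : Submodule A N) => (q.out : V),
    ?_, fun y hy => ?_⟩
  · simp only [Finset.coe_image, Set.image_subset_iff]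
    exact fun q _ => q.out.2
  set q := Submodule.Quotient.mk (p := Ideal.span {a} • (⊤ : Submodule A N)) ⟨y, hy⟩
  have hq : ⟨y, hy⟩ - q.out ∈ a • (⊤ : Submodule A N) := by
    rw [← ideal_span_singleton_smul]
    exact (Submodule.Quotient.eq _).1 (Submodule.Quotient.mk_out q).symm
  obtain ⟨z, -, hz⟩ := (mem_smul_pointwise_iff_exists _ _ _).1 hq
  exact ⟨q.out, Finset.mem_image_of_mem _ (Finset.mem_univ q), z, z.2,
    congrArg Subtype.val hz.symm⟩

section LambdaPrime

variable {A F : Type*} [CommRing A] [Field F] [Algebra A F] {m : ℕ}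
  (L : Submodule A (F × (Fin m → F))) (v : F × (Fin m → F))

theorem uAct_sub (l' : Fin m → F) (x : F × (Fin m → F)) :
    uAct l' x - v = (x - v) + ((0 : F), x.1 • l') := by
  ext <;> simp [uAct]; abel

theorem mem_lambdaPrimeSet_iff {l' : Fin m → F} :
    l' ∈ LambdaPrimeSet L v ↔ ∀ x, x - v ∈ L → ((0 : F), x.1 • l') ∈ L := by
  refine ⟨fun hl x hx => hl x.1 ⟨x.2 - v.2, hx⟩, fun hl x1 ⟨x', hx'⟩ => ?_⟩
  have hsub : (x1, x' + v.2) - v = (x1 - v.1, x') := Prod.ext rfl (add_sub_cancel_right x' v.2)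
  exact hl (x1, x' + v.2) (hsub ▸ hx')

theorem mapsTo_uAct {l' : Fin m → F} (hl : l' ∈ LambdaPrimeSet L v) :
    Set.MapsTo (uAct l') {x | x - v ∈ L} {x | x - v ∈ L} := fun x hx => by
  show uAct l' x - v ∈ L
  rw [uAct_sub]
  exact L.add_mem hx ((mem_lambdaPrimeSet_iff L v).1 hl x hx)

theorem neg_mem_lambdaPrimeSet {l' : Fin m → F} (hl : l' ∈ LambdaPrimeSet L v) :
    -l' ∈ LambdaPrimeSet L v := fun x1 hx1 => by
  simpa [LprimeSet] using L.neg_mem (hl x1 hx1)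

theorem image_uAct_eq_iff (l' : Fin m → F) :
    uAct l' '' {x | x - v ∈ L} = {x | x - v ∈ L} ↔ l' ∈ LambdaPrimeSet L v := by
  refine ⟨fun h => (mem_lambdaPrimeSet_iff L v).2 fun x hx => ?_, fun hl => ?_⟩
  · have hux : uAct l' x - v ∈ L := h.subset (Set.mem_image_of_mem _ hx)
    rwa [uAct_sub, L.add_mem_iff_right hx] at hux
  · refine (mapsTo_uAct L v hl).image_subset.antisymm fun x hx => ⟨uAct (-l') x,
      mapsTo_uAct L v (neg_mem_lambdaPrimeSet L v hl) hx, ?_⟩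
    simp [uAct]

theorem lambdaPrimeSet_eq_smulColon :
    LambdaPrimeSet L v = smulColon (span A {x1 | x1 - v.1 ∈ LoneSet L})
      (L.comap ((LinearMap.inr F F (Fin m → F)).restrictScalars A)) := by
  ext l'
  rw [SetLike.mem_coe, mem_smulColon_span]
  rfl

theorem fg_span_sub_mem_loneSet [IsNoetherianRing A] (hL : L.FG) :
    (span A {x1 | x1 - v.1 ∈ LoneSet L}).FG := by
  refine ((fg_span_singleton v.1).sup (hL.map (LinearMap.fst A F (Fin m → F)))).of_le
    (span_le.2 fun x1 ⟨x', hx'⟩ => ?_)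
  rw [← add_sub_cancel v.1 x1]
  exact add_mem_sup (mem_span_singleton_self v.1) ⟨_, hx', rfl⟩

theorem exists_ne_zero_sub_mem_loneSet
    (hL : span F (L : Set (F × (Fin m → F))) = ⊤) : ∃ x1 : F, x1 - v.1 ∈ LoneSet L ∧ x1 ≠ 0 := by
  have hspan : span F (LoneSet L) = ⊤ := by
    have : LoneSet L = LinearMap.fst F F (Fin m → F) '' L := by
      ext x1; simp [LoneSet]
    rw [this, span_image, hL, Submodule.map_top, LinearMap.range_eq_top.2 LinearMap.fst_surjective]
  obtain ⟨y, hy, hy0⟩ : ∃ y ∈ LoneSet L, y ≠ 0 := by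
    by_contra! h
    exact bot_ne_top (hspan ▸ (span_eq_bot.2 h).symm)
  by_cases hv : v.1 = 0
  · exact ⟨y, by rwa [hv, sub_zero], hy0⟩
  · exact ⟨v.1, by rw [sub_self]; exact ⟨0, L.zero_mem⟩, hv⟩

end LambdaPrime

theorem lambda_prime_lemma_general
    (A : Type*) [CommRing A] [IsDedekindDomain A]
    (F : Type*) [Field F] [Algebra A F] [IsFractionRing A F]
    (hfinquot : ∀ I : Ideal A, I ≠ ⊥ → Finite (A ⧸ I))
    (m : ℕ)
    (L : Submodule A (F × (Fin m → F))) (hLfg : L.FG)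
    (hLspan : Submodule.span F (L : Set (F × (Fin m → F))) = ⊤)
    (v : F × (Fin m → F)) :
    (∀ l' : Fin m → F,
        (uAct l' '' {x | x - v ∈ L} = {x | x - v ∈ L}) ↔ l' ∈ LambdaPrimeSet L v) ∧
    (∃ N : Submodule A (Fin m → F),
        (N : Set (Fin m → F)) = LambdaPrimeSet L v ∧ N.FG ∧
        Submodule.span F (LambdaPrimeSet L v) = ⊤) ∧
    (∀ x1 : F, x1 - v.1 ∈ LoneSet L → x1 ≠ 0 →
        (∀ l' ∈ LambdaPrimeSet L v, x1 • l' ∈ LprimeSet L) ∧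
        ∃ T : Finset (Fin m → F), (T : Set (Fin m → F)) ⊆ LprimeSet L ∧
          ∀ y ∈ LprimeSet L, ∃ t ∈ T, y - t ∈ (fun l' => x1 • l') '' LambdaPrimeSet L v) := by
  have hΛ := lambdaPrimeSet_eq_smulColon L v
  set inr := (LinearMap.inr F F (Fin m → F)).restrictScalars A
  set N := L.comap inr
  have hMfg := fg_span_sub_mem_loneSet L v hLfg
  have hNfg : N.FG :=
    fg_of_fg_map_injective inr LinearMap.inr_injective (hLfg.of_le (map_comap_le inr L))
  have hNspan : span F (N : Set (Fin m → F)) = ⊤ := by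
    rw [span_comap_restrictScalars, hLspan, comap_top]
  obtain ⟨x0, hx0, hx00⟩ := exists_ne_zero_sub_mem_loneSet L v hLspan
  refine ⟨image_uAct_eq_iff L v, ⟨_, hΛ.symm, fg_smulColon hNfg (subset_span hx0) hx00, ?_⟩,
    fun x1 hx1 hx10 => ⟨fun l' hl' => hl' x1 hx1, ?_⟩⟩
  · rw [hΛ, eq_top_iff, ← hNspan]
    exact span_le_span_smulColon hMfg
  obtain ⟨a, ha, hdiv⟩ := exists_div_smul_mem_smulColon (N := N) hMfg x1
  have := hfinquot (Ideal.span {a})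
    (by rw [Ne, Ideal.span_singleton_eq_bot]; exact nonZeroDivisors.ne_zero ha)
  obtain ⟨T, hTN, hT⟩ := hNfg.exists_finset_sub_mem_smul a
  refine ⟨T, hTN, fun y hy => ?_⟩
  obtain ⟨t, ht, z, hz, hyt⟩ := hT y hy
  rw [hΛ]
  refine ⟨t, ht, _, hdiv z hz, ?_⟩
  dsimp only
  rw [smul_smul, mul_div_cancel₀ _ hx10, algebraMap_smul, hyt]

/-- Lemma 13.7: description of `Λ′` as the stabilizer of `v+L` in `U(F)`;
`Λ′` is a finitely generated `A`-module spanning `F^{r-1}`; and `x₁Λ′ ⊆ L′` has finite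
index for every nonzero `x₁ ∈ v₁ + L₁`. -/
theorem lambda_prime_lemma
    (Fq : Type*) [Field Fq] [Fintype Fq]
    (A : Type*) [CommRing A] [IsDomain A] [IsDedekindDomain A] [Algebra Fq A]
    (F : Type*) [Field F] [Algebra A F] [IsFractionRing A F]
    (hfinquot : ∀ I : Ideal A, I ≠ ⊥ → Finite (A ⧸ I))
    (m : ℕ) (hm : 1 ≤ m)
    (L : Submodule A (F × (Fin m → F))) (hLfg : L.FG)
    (hLspan : Submodule.span F (L : Set (F × (Fin m → F))) = ⊤)
    (v : F × (Fin m → F)) :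
    (∀ l' : Fin m → F,
        (uAct l' '' {x | x - v ∈ L} = {x | x - v ∈ L}) ↔ l' ∈ LambdaPrimeSet L v) ∧
    (∃ N : Submodule A (Fin m → F),
        (N : Set (Fin m → F)) = LambdaPrimeSet L v ∧ N.FG ∧
        Submodule.span F (LambdaPrimeSet L v) = ⊤) ∧
    (∀ x1 : F, x1 - v.1 ∈ LoneSet L → x1 ≠ 0 →
        (∀ l' ∈ LambdaPrimeSet L v, x1 • l' ∈ LprimeSet L) ∧
        ∃ T : Finset (Fin m → F), (T : Set (Fin m → F)) ⊆ LprimeSet L ∧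
          ∀ y ∈ LprimeSet L, ∃ t ∈ T, y - t ∈ (fun l' => x1 • l') '' LambdaPrimeSet L v) :=
  lambda_prime_lemma_general A F hfinquot m L hLfg hLspan v
end

section
/- Let R be a discrete valuation ring with fraction field Q and let r ≥ 2. Let M, M′ ⊆ Q^r be free R-submodules of rank r that span Q^r (row vectors), let v, v′ ∈ Q^r and δ ∈ GL_r(Q). Assume vδ + Mδ ⊆ v′ + M′, and assume that v ∈ M or vδ + Mδ = v′ + M′. Put K′ := {k ∈ GL_r(Q) : v′k + M′k = v′ + M′} and K := {k ∈ K′ : vδk + Mδk = vδ + Mδ}. Then {det k : k ∈ K} = {det k : k ∈ K′}. (Lemma 14.2, localized form.) -/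
/-! If `v ∈ M`, then `v' ∈ M'` and both cosets are the lattices `M'` and `N = Mδ ⊆ M'`.
A `k` stabilising the lattice `M'` restricts to an automorphism of the free `R`-module `M'`,
so `det k ∈ R^×`. Conversely, the elementary divisor theorem gives a basis `e` of `M'` such
that `N` is spanned by multiples `aᵢ • e (f i)`; scaling one basis vector by a unit `u`
stabilises both `M'` and `N` and has determinant `u`. If instead `vδ + Mδ = v' + M'`, the two
stabiliser conditions coincide. -/
open Matrix Module Submodule Set

section Lattice

variable {R S V ι : Type*} [CommRing R] [IsDomain R] [CommRing S] [Nontrivial S] [Algebra R S]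
  [IsTorsionFree R S] [AddCommGroup V] [Module S V] [Module R V] [IsScalarTower R S V]
  [Fintype ι]

theorem Module.Basis.algebraMap_det_restrict (b : Basis ι S V) (f : V →ₗ[S] V)
    (hf : ∀ x ∈ span R (range b), f x ∈ span R (range b)) :
    algebraMap R S (LinearMap.det ((f.restrictScalars R).restrict hf)) = LinearMap.det f := by
  classical
  rw [← LinearMap.det_toMatrix (b.restrictScalars R), ← LinearMap.det_toMatrix b,
    RingHom.map_det]
  congr 1
  ext i j
  rw [RingHom.mapMatrix_apply, Matrix.map_apply, LinearMap.toMatrix_apply,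
    LinearMap.toMatrix_apply, Basis.restrictScalars_repr_apply]
  exact congrArg (b.repr · i) (congrArg f (b.restrictScalars_apply R j))

theorem Module.Basis.exists_det_eq_algebraMap_of_image_span_eq (b : Basis ι S V)
    (f : V →ₗ[S] V) (hf : ⇑f '' span R (range b) = span R (range b)) :
    ∃ u : Rˣ, LinearMap.det f = algebraMap R S u := by
  have : Module.Finite R (span R (range b)) := .of_basis (b.restrictScalars R)
  have hmaps : ∀ x ∈ span R (range b), f x ∈ span R (range b) :=
    fun x hx => hf.subset (mem_image_of_mem f hx)
  set g := (f.restrictScalars R).restrict hmaps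
  have hg : Function.Surjective g := by
    rintro ⟨y, hy⟩
    obtain ⟨x, hx, rfl⟩ := hf.symm.subset hy
    exact ⟨⟨x, hx⟩, rfl⟩
  have hunit : IsUnit (LinearMap.det g) := LinearMap.isUnit_det g <| (End.isUnit_iff g).mpr
    ⟨OrzechProperty.injective_of_surjective_endomorphism g hg, hg⟩
  exact ⟨hunit.unit, by rw [IsUnit.unit_spec, b.algebraMap_det_restrict]⟩

end Lattice

theorem LinearEquiv.image_span_eq_of_forall_eq_unit_smul {R M : Type*} [CommRing R]
    [AddCommGroup M] [Module R M] (T : M ≃ₗ[R] M) {s : Set M}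
    (hT : ∀ x ∈ s, ∃ w : Rˣ, T x = w • x) :
    ⇑T '' span R s = span R s := by
  suffices (span R s).map (T : M →ₗ[R] M) = span R s from congrArg SetLike.coe this
  rw [map_span]
  refine le_antisymm (span_le.mpr ?_) (span_le.mpr fun x hx => ?_)
  · rintro _ ⟨x, hx, rfl⟩
    obtain ⟨w, hw⟩ := hT x hx
    exact hw ▸ smul_mem _ _ (subset_span hx)
  · obtain ⟨w, hw⟩ := hT x hx
    have hx' : x = w⁻¹ • T x := by rw [hw, inv_smul_smul]
    exact hx' ▸ smul_mem _ _ (subset_span (mem_image_of_mem T hx))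

section Scaling

variable {R S V ι : Type*} [CommRing R] [CommRing S] [Algebra R S] [AddCommGroup V]
  [Module S V] [Module R V] [IsScalarTower R S V]

theorem Module.Basis.exists_linearEquiv_apply_eq_smul [Fintype ι] (e : Basis ι S V)
    (w : ι → Rˣ) :
    ∃ T : V ≃ₗ[S] V, (∀ j, T (e j) = (w j : R) • e j) ∧
      LinearMap.det (T : V →ₗ[S] V) = algebraMap R S (∏ j, w j : Rˣ) := by
  classical
  set w' : ι → Sˣ := fun j => Units.map (algebraMap R S) (w j)
  set T := e.equiv (e.unitsSMul w') (Equiv.refl ι)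
  have hT : ∀ j, T (e j) = (w' j : S) • e j := fun j => by
    rw [Basis.equiv_apply, Equiv.refl_apply, Basis.unitsSMul_apply, Units.smul_def]
  refine ⟨T, fun j => (hT j).trans (algebraMap_smul S (w j : R) (e j)), ?_⟩
  have hTe : ⇑(T : V →ₗ[S] V) ∘ e = e.unitsSMul w' := funext fun j => by
    rw [Function.comp_apply, LinearEquiv.coe_coe, hT, Basis.unitsSMul_apply, Units.smul_def]
  have := e.det_comp T e
  rw [hTe, e.det_unitsSMul_self, e.det_self, mul_one] at this
  rw [← this, Units.coe_prod, map_prod]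
  rfl

theorem Module.Basis.image_span_eq_of_apply_eq_smul (e : Basis ι S V) {w : ι → Rˣ}
    {T : V ≃ₗ[S] V} (hT : ∀ j, T (e j) = (w j : R) • e j) {s : Set V}
    (hs : ∀ x ∈ s, ∃ j, ∃ c : R, x = c • e j) :
    ⇑T '' span R s = span R s :=
  (T.restrictScalars R).image_span_eq_of_forall_eq_unit_smul fun x hx => by
    obtain ⟨j, c, rfl⟩ := hs x hx
    refine ⟨w j, ?_⟩
    rw [map_smul, LinearEquiv.restrictScalars_apply, hT, Units.smul_def, smul_comm]

end Scaling

section SmithNormalForm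

variable {R S V ι : Type*} [CommRing R] [IsDomain R] [IsPrincipalIdealRing R] [CommRing S]
  [Nontrivial S] [Algebra R S] [IsTorsionFree R S] [AddCommGroup V] [Module S V] [Module R V]
  [IsScalarTower R S V] [Fintype ι]

theorem Module.Basis.exists_basis_smithNormalForm (b : Basis ι S V) {N : Submodule R V}
    (hN : N ≤ span R (range b)) :
    ∃ (e : Basis ι S V) (n : ℕ) (f : Fin n → ι) (a : Fin n → R),
      span R (range e) = span R (range b) ∧ N = span R (range fun i => a i • e (f i)) := by
  set L := span R (range b)
  obtain ⟨n, snf⟩ := Submodule.smithNormalForm (b.restrictScalars R) (N.comap L.subtype)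
  have hspan : span R (range (L.subtype ∘ snf.bM)) = L := by
    rw [range_comp, span_image, snf.bM.span_eq, map_subtype_top]
  have htop : ⊤ ≤ span S (range (L.subtype ∘ snf.bM)) := by
    rw [← b.span_eq, span_le]
    rintro _ ⟨j, rfl⟩
    refine span_le_restrictScalars R S _ ?_
    rw [hspan]
    exact subset_span (mem_range_self j)
  set e := basisOfTopLeSpanOfCardEqFinrank _ htop (finrank_eq_card_basis b).symm
  have he : ⇑e = L.subtype ∘ snf.bM := coe_basisOfTopLeSpanOfCardEqFinrank _ _ _
  refine ⟨e, n, snf.f, snf.a, he ▸ hspan, ?_⟩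
  have hbN : (fun i => snf.a i • e (snf.f i)) =
      L.subtype ∘ (N.comap L.subtype).subtype ∘ snf.bN := funext fun i => by
    simp [he, snf.snf]
  rw [hbN, range_comp, span_image, range_comp, span_image, snf.bN.span_eq, map_subtype_top,
    map_comap_subtype, inf_eq_right.mpr hN]

theorem Module.Basis.exists_linearEquiv_det_eq_of_le [Nonempty ι] (b : Basis ι S V)
    {N : Submodule R V} (hN : N ≤ span R (range b)) (u : Rˣ) :
    ∃ T : V ≃ₗ[S] V, ⇑T '' span R (range b) = span R (range b) ∧ ⇑T '' N = N ∧
      LinearMap.det (T : V →ₗ[S] V) = algebraMap R S u := by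
  classical
  obtain ⟨e, n, f, a, he, rfl⟩ := b.exists_basis_smithNormalForm hN
  obtain ⟨T, hT, hdet⟩ :=
    e.exists_linearEquiv_apply_eq_smul (Pi.mulSingle (Classical.arbitrary ι) u)
  refine ⟨T, he ▸ e.image_span_eq_of_apply_eq_smul hT ?_,
    e.image_span_eq_of_apply_eq_smul hT ?_, by rw [hdet, Fintype.prod_pi_mulSingle']⟩
  · rintro _ ⟨j, rfl⟩
    exact ⟨j, 1, (one_smul R _).symm⟩
  · rintro _ ⟨i, rfl⟩
    exact ⟨f i, a i, rfl⟩

end SmithNormalForm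

section GeneralLinearGroup

variable {n K : Type*} [Fintype n] [DecidableEq n] [CommRing K]

theorem Matrix.det_vecMulLinear (A : Matrix n n K) : LinearMap.det A.vecMulLinear = A.det := by
  rw [← mulVecLin_transpose, ← det_transpose]
  exact LinearMap.det_toLin' Aᵀ

theorem Matrix.exists_GL_vecMul_eq (T : (n → K) ≃ₗ[K] (n → K)) :
    ∃ k : GL n K, (fun x => vecMul x (k : Matrix n n K)) = ⇑T ∧
      (k : Matrix n n K).det = LinearMap.det (T : (n → K) →ₗ[K] n → K) := by
  set A := LinearMap.toMatrixRight' (T : (n → K) →ₗ[K] n → K)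
  have hA : A.vecMulLinear = T := LinearMap.toMatrixRight'.symm_apply_apply _
  have hdet : A.det = LinearMap.det (T : (n → K) →ₗ[K] n → K) := by
    rw [← det_vecMulLinear, hA]
  exact ⟨GeneralLinearGroup.mk'' A (hdet ▸ T.isUnit_det'), congrArg DFunLike.coe hA, hdet⟩

end GeneralLinearGroup

theorem Submodule.setOf_sub_mem_eq {R M : Type*} [Ring R] [AddCommGroup M] [Module R M]
    {p : Submodule R M} {v : M} (hv : v ∈ p) : {x | x - v ∈ p} = p :=
  Set.ext fun _ => p.sub_mem_iff_left hv

theorem det_stabilizer_eq_general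
    (R : Type*) [CommRing R] [IsDomain R] [IsDiscreteValuationRing R]
    (Q : Type*) [Field Q] [Algebra R Q] [IsFractionRing R Q]
    (r : ℕ) (hr : 2 ≤ r)
    (M M' : Submodule R (Fin r → Q))
    (hM' : ∃ b : Module.Basis (Fin r) Q (Fin r → Q), M' = Submodule.span R (Set.range b))
    (v v' : Fin r → Q) (δ : GL (Fin r) Q)
    (hsub : (fun x => Matrix.vecMul x (δ : Matrix (Fin r) (Fin r) Q)) ''
        {x | x - v ∈ M} ⊆ {x | x - v' ∈ M'})
    (halt : v ∈ M ∨
      (fun x => Matrix.vecMul x (δ : Matrix (Fin r) (Fin r) Q)) '' {x | x - v ∈ M} =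
        {x | x - v' ∈ M'}) :
    {d : Q | ∃ k : GL (Fin r) Q,
        ((fun x => Matrix.vecMul x ((k : Matrix (Fin r) (Fin r) Q))) ''
            {x | x - v' ∈ M'} = {x | x - v' ∈ M'}) ∧
        ((fun x => Matrix.vecMul x ((k : Matrix (Fin r) (Fin r) Q))) ''
            ((fun x => Matrix.vecMul x ((δ : Matrix (Fin r) (Fin r) Q))) '' {x | x - v ∈ M}) =
          (fun x => Matrix.vecMul x ((δ : Matrix (Fin r) (Fin r) Q))) '' {x | x - v ∈ M}) ∧
        d = Matrix.det (k : Matrix (Fin r) (Fin r) Q)} =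
    {d : Q | ∃ k : GL (Fin r) Q,
        ((fun x => Matrix.vecMul x ((k : Matrix (Fin r) (Fin r) Q))) ''
            {x | x - v' ∈ M'} = {x | x - v' ∈ M'}) ∧
        d = Matrix.det (k : Matrix (Fin r) (Fin r) Q)} := by
  rcases halt with hv | hcoset
  · obtain ⟨b, rfl⟩ := hM'
    have hv' : v' ∈ span R (range b) := by
      have h0 : 0 - v' ∈ span R (range b) :=
        hsub ⟨0, by simpa using neg_mem hv, zero_vecMul _⟩
      simpa using neg_mem h0
    rw [setOf_sub_mem_eq hv, setOf_sub_mem_eq hv'] at hsub ⊢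
    have : Nonempty (Fin r) := ⟨⟨0, by omega⟩⟩
    refine subset_antisymm (fun d ⟨k, hk, _, hd⟩ => ⟨k, hk, hd⟩) ?_
    rintro _ ⟨k, hk, rfl⟩
    obtain ⟨u, hu⟩ := b.exists_det_eq_algebraMap_of_image_span_eq (R := R)
      (vecMulLinear (k : Matrix (Fin r) (Fin r) Q)) hk
    obtain ⟨T, hTb, hTN, hT⟩ := b.exists_linearEquiv_det_eq_of_le
      (N := M.map ((vecMulLinear (δ : Matrix (Fin r) (Fin r) Q)).restrictScalars R)) hsub u
    obtain ⟨k', hk'T, hk'⟩ := exists_GL_vecMul_eq T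
    refine ⟨k', hk'T ▸ hTb, hk'T ▸ hTN, ?_⟩
    rw [hk', hT, ← hu, det_vecMulLinear]
  · simp only [hcoset, and_self_left]

/-- Lemma 14.2, localized form: over a DVR `R` with fraction field `Q`,
the stabilizer subgroups `K ≤ K′` of the data `(v′+M′, vδ+Mδ)` have the same set of
determinants. -/
theorem det_stabilizer_eq
    (R : Type*) [CommRing R] [IsDomain R] [IsDiscreteValuationRing R]
    (Q : Type*) [Field Q] [Algebra R Q] [IsFractionRing R Q]
    (r : ℕ) (hr : 2 ≤ r)
    (M M' : Submodule R (Fin r → Q))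
    (hM : ∃ b : Module.Basis (Fin r) Q (Fin r → Q), M = Submodule.span R (Set.range b))
    (hM' : ∃ b : Module.Basis (Fin r) Q (Fin r → Q), M' = Submodule.span R (Set.range b))
    (v v' : Fin r → Q) (δ : GL (Fin r) Q)
    (hsub : (fun x => Matrix.vecMul x (δ : Matrix (Fin r) (Fin r) Q)) ''
        {x | x - v ∈ M} ⊆ {x | x - v' ∈ M'})
    (halt : v ∈ M ∨
      (fun x => Matrix.vecMul x (δ : Matrix (Fin r) (Fin r) Q)) '' {x | x - v ∈ M} =
        {x | x - v' ∈ M'}) :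
    {d : Q | ∃ k : GL (Fin r) Q,
        ((fun x => Matrix.vecMul x ((k : Matrix (Fin r) (Fin r) Q))) ''
            {x | x - v' ∈ M'} = {x | x - v' ∈ M'}) ∧
        ((fun x => Matrix.vecMul x ((k : Matrix (Fin r) (Fin r) Q))) ''
            ((fun x => Matrix.vecMul x ((δ : Matrix (Fin r) (Fin r) Q))) '' {x | x - v ∈ M}) =
          (fun x => Matrix.vecMul x ((δ : Matrix (Fin r) (Fin r) Q))) '' {x | x - v ∈ M}) ∧
        d = Matrix.det (k : Matrix (Fin r) (Fin r) Q)} =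
    {d : Q | ∃ k : GL (Fin r) Q,
        ((fun x => Matrix.vecMul x ((k : Matrix (Fin r) (Fin r) Q))) ''
            {x | x - v' ∈ M'} = {x | x - v' ∈ M'}) ∧
        d = Matrix.det (k : Matrix (Fin r) (Fin r) Q)} :=
  det_stabilizer_eq_general R Q r hr M M' hM' v v' δ hsub halt
end

section
/- Let q be a prime power, r ≥ 1 an integer, and μ : {1,…,r} → ℕ any function. Then P := {g ∈ GL_r(𝔽_q) : g_{ij} = 0 for all i, j with μ(j) > μ(i)} is a subgroup of GL_r(𝔽_q), and its index [GL_r(𝔽_q) : P] is congruent to 1 modulo q. (Parabolic index claim in the proof of Lemma 14.5.) -/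
/-! For `b : n → α`, the invertible matrices that are block triangular for the blocks `b⁻¹(a)`
form a subgroup `P` of `GL_n(𝔽_q)`. Such a matrix is a free choice of the entries `(i, j)` with
`b i < b j` together with invertible diagonal blocks. With `n_a = |b⁻¹(a)|` and
`|GL_m(𝔽_q)| = q^(m choose 2) · ∏_{k=1}^m (q^k - 1)` this gives
`|P| = q^(|n| choose 2) · ∏_a ∏_{k=1}^{n_a} (q^k - 1)`, with the same power of `q` as in
`|GL_n(𝔽_q)|`. So `[GL_n : P] · ∏_a ∏_{k ≤ n_a} (q^k - 1) = ∏_{k ≤ |n|} (q^k - 1)`; modulo `q`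
both products are `(-1)^|n|`, hence the index is `1` modulo `q`. The parabolic subgroup is the
case `b = toDual ∘ μ`. -/

open Finset

noncomputable def unitsEquivIsUnit (M : Type*) [Monoid M] : Mˣ ≃ {x : M // IsUnit x} where
  toFun u := ⟨u, u.isUnit⟩
  invFun x := x.2.unit
  left_inv _ := Units.ext rfl
  right_inv _ := rfl

section Combinatorics

variable {n α : Type*} [Fintype n] [LinearOrder α] (b : n → α)

theorem two_mul_choose_two_add_self (m : ℕ) : 2 * m.choose 2 + m = m * m := by
  induction m with
  | zero => rfl
  | succ m ih => rw [Nat.choose_succ_succ', Nat.choose_one_right]; linarith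

theorem sum_card_fiber_eq_card :
    ∑ a ∈ univ.image b, Fintype.card {i // b i = a} = Fintype.card n := by
  simp only [Fintype.card_subtype]
  exact (card_eq_sum_card_image b univ).symm

theorem card_mul_self_eq_two_mul_card_lt_add_sum :
    Fintype.card n * Fintype.card n = 2 * Fintype.card {p : n × n // b p.1 < b p.2} +
      ∑ a ∈ univ.image b, Fintype.card {i // b i = a} * Fintype.card {i // b i = a} := by
  have hswap :
      Fintype.card {p : n × n // b p.2 < b p.1} = Fintype.card {p : n × n // b p.1 < b p.2} :=
    Fintype.card_congr ((Equiv.prodComm n n).subtypeEquiv fun _ => Iff.rfl)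
  have hdiag : Fintype.card {p : n × n // b p.1 = b p.2} =
      ∑ a ∈ univ.image b, Fintype.card {i // b i = a} * Fintype.card {i // b i = a} := by
    rw [Fintype.card_congr (Equiv.subtypeProdEquivSigmaSubtype fun i j => b i = b j),
      Fintype.card_sigma]
    have hsymm (i : n) : Fintype.card {j // b i = b j} = Fintype.card {j // b j = b i} :=
      Fintype.card_congr (Equiv.subtypeEquivRight fun _ => eq_comm)
    rw [sum_congr rfl fun i _ => hsymm i, sum_comp (fun a => Fintype.card {j // b j = a}) b]
    simp only [Fintype.card_subtype, smul_eq_mul]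
  have htri : Fintype.card n * Fintype.card n = Fintype.card {p : n × n // b p.1 < b p.2} +
      Fintype.card {p : n × n // b p.2 < b p.1} + Fintype.card {p : n × n // b p.1 = b p.2} := by
    simp only [Fintype.card_subtype, card_filter, ← sum_add_distrib, ← Fintype.card_prod]
    rw [Fintype.card_eq_sum_ones]
    refine sum_congr rfl fun p _ => ?_
    rcases lt_trichotomy (b p.1) (b p.2) with h | h | h
    · simp [h, h.ne, h.not_gt]
    · simp [h]
    · simp [h, h.ne', h.not_gt]
  omega

theorem card_lt_add_sum_choose_two :
    Fintype.card {p : n × n // b p.1 < b p.2} +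
        ∑ a ∈ univ.image b, (Fintype.card {i // b i = a}).choose 2 =
      (Fintype.card n).choose 2 := by
  have hblocks : ∑ a ∈ univ.image b, (2 * (Fintype.card {i // b i = a}).choose 2 +
      Fintype.card {i // b i = a}) =
      ∑ a ∈ univ.image b, Fintype.card {i // b i = a} * Fintype.card {i // b i = a} :=
    sum_congr rfl fun a _ => two_mul_choose_two_add_self _
  rw [sum_add_distrib, ← mul_sum, sum_card_fiber_eq_card] at hblocks
  have := card_mul_self_eq_two_mul_card_lt_add_sum b
  have := two_mul_choose_two_add_self (Fintype.card n)
  omega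

end Combinatorics

def prodPowSubOne (q N : ℕ) : ℕ := ∏ i ∈ range N, (q ^ (N - i) - 1)

theorem cast_prodPowSubOne {q : ℕ} (hq : 1 ≤ q) (N : ℕ) :
    (prodPowSubOne q N : ZMod q) = (-1) ^ N := by
  have hfactor : ∀ i ∈ range N, ((q ^ (N - i) - 1 : ℕ) : ZMod q) = -1 := fun i hi => by
    rw [Nat.cast_sub (Nat.one_le_pow _ _ hq), Nat.cast_pow, ZMod.natCast_self,
      zero_pow (Nat.sub_ne_zero_of_lt (mem_range.1 hi)), Nat.cast_one, zero_sub]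
  rw [prodPowSubOne, Nat.cast_prod, prod_congr rfl hfactor, prod_const, card_range]

theorem card_GL_eq_pow_mul_prodPowSubOne (K m : Type*) [Field K] [Fintype K] [Fintype m]
    [DecidableEq m] :
    Nat.card (GL m K) =
      Fintype.card K ^ (Fintype.card m).choose 2 *
        prodPowSubOne (Fintype.card K) (Fintype.card m) := by
  rw [Nat.card_congr (Units.mapEquiv
      (Matrix.reindexAlgEquiv K K (Fintype.equivFin m)).toRingEquiv.toMulEquiv).toEquiv,
    Matrix.card_GL_field,
    Fin.prod_univ_eq_prod_range (fun i => Fintype.card K ^ Fintype.card m - Fintype.card K ^ i),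
    Nat.choose_two_right, ← sum_range_id, ← prod_pow_eq_pow_sum, prodPowSubOne,
    ← prod_mul_distrib]
  refine prod_congr rfl fun i hi => ?_
  rw [Nat.mul_sub, mul_one, ← pow_add, Nat.add_sub_cancel' (mem_range.1 hi).le]

namespace Matrix

variable {n α R : Type*} [Fintype n] [DecidableEq n] [LinearOrder α] (b : n → α)

def blockTriangularEquiv [Zero R] : {M : Matrix n n R // M.BlockTriangular b} ≃
    (∀ a : univ.image b, Matrix {i // b i = a} {i // b i = a} R) ×
      ({p : n × n // b p.1 < b p.2} → R) where
  toFun M := (fun a => M.1.toSquareBlock b a, fun p => M.1 p.1.1 p.1.2)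
  invFun x := ⟨fun i j =>
      if h : b i = b j then
        x.1 ⟨b i, mem_image_of_mem b (mem_univ i)⟩ ⟨i, rfl⟩ ⟨j, h.symm⟩
      else if h' : b i < b j then x.2 ⟨(i, j), h'⟩ else 0,
    fun i j hji => by simp [hji.ne', hji.not_gt]⟩
  left_inv := by
    rintro ⟨M, hM⟩
    ext i j
    rcases lt_trichotomy (b i) (b j) with h | h | h
    · simp [h.ne, h]
    · exact dif_pos h
    · simp [h.ne', h.not_gt, hM h]
  right_inv := by
    rintro ⟨B, f⟩
    refine Prod.ext (funext fun a => ?_) (funext fun p => by simp [p.2.ne, p.2])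
    obtain ⟨a, ha⟩ := a
    ext ⟨i, hi : b i = a⟩ ⟨j, hj : b j = a⟩
    subst hi
    exact dif_pos hj.symm

theorem BlockTriangular.isUnit_iff [CommRing R] {M : Matrix n n R} (hM : M.BlockTriangular b) :
    IsUnit M ↔ ∀ a ∈ univ.image b, IsUnit (M.toSquareBlock b a) := by
  simp only [isUnit_iff_isUnit_det, hM.det, IsUnit.prod_iff]

namespace GeneralLinearGroup

def blockTriangular (R : Type*) [CommRing R] : Subgroup (GL n R) where
  carrier := {g | (g : Matrix n n R).BlockTriangular b}
  one_mem' := blockTriangular_one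
  mul_mem' ha hb := ha.mul hb
  inv_mem' {g} hg := by
    have : Invertible (g : Matrix n n R) := g.invertible
    simpa [coe_units_inv] using blockTriangular_inv_of_blockTriangular hg

noncomputable def blockTriangularEquivIsUnit [CommRing R] :
    blockTriangular b R ≃ {M : {M : Matrix n n R // M.BlockTriangular b} // IsUnit M.1} where
  toFun g := ⟨⟨g.1, g.2⟩, g.1.isUnit⟩
  invFun M := ⟨M.2.unit, M.1.2⟩
  left_inv _ := Subtype.ext (Units.ext rfl)
  right_inv _ := rfl

theorem card_blockTriangular [CommRing R] [Fintype R] :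
    Nat.card (blockTriangular b R) =
      (∏ a ∈ univ.image b, Nat.card (GL {i // b i = a} R)) *
        Fintype.card R ^ Fintype.card {p : n × n // b p.1 < b p.2} := by
  have hunit (M : {M : Matrix n n R // M.BlockTriangular b}) :
      IsUnit M.1 ↔ IsUnit (blockTriangularEquiv b M).1 := by
    rw [M.2.isUnit_iff, Pi.isUnit_iff, Subtype.forall]
    rfl
  rw [Nat.card_congr ((blockTriangularEquivIsUnit b).trans
      (((blockTriangularEquiv b).subtypeEquiv hunit).trans
        Equiv.prodSubtypeFstEquivSubtypeProd)),
    Nat.card_prod, ← Nat.card_congr (unitsEquivIsUnit _),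
    Nat.card_congr MulEquiv.piUnits.toEquiv, Nat.card_pi, Nat.card_fun,
    prod_coe_sort (image b univ) fun a => Nat.card (GL {i // b i = a} R),
    Nat.card_eq_fintype_card, Nat.card_eq_fintype_card]

variable {K : Type*} [Field K] [Fintype K]

theorem card_blockTriangular_eq_pow_mul :
    Nat.card (blockTriangular b K) = Fintype.card K ^ (Fintype.card n).choose 2 *
      ∏ a ∈ univ.image b, prodPowSubOne (Fintype.card K) (Fintype.card {i // b i = a}) := by
  simp only [card_blockTriangular, card_GL_eq_pow_mul_prodPowSubOne, prod_mul_distrib,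
    prod_pow_eq_pow_sum, ← card_lt_add_sum_choose_two b, pow_add]
  ring

theorem index_blockTriangular_mul_prod :
    (blockTriangular b K).index *
        ∏ a ∈ univ.image b, prodPowSubOne (Fintype.card K) (Fintype.card {i // b i = a}) =
      prodPowSubOne (Fintype.card K) (Fintype.card n) := by
  have h := (blockTriangular b K).index_mul_card
  rw [card_blockTriangular_eq_pow_mul, card_GL_eq_pow_mul_prodPowSubOne, mul_left_comm] at h
  exact Nat.eq_of_mul_eq_mul_left (pow_pos Fintype.card_pos _) h

theorem index_blockTriangular_modEq_one :
    (blockTriangular b K).index ≡ 1 [MOD Fintype.card K] := by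
  have h := congrArg (Nat.cast : ℕ → ZMod (Fintype.card K))
    (index_blockTriangular_mul_prod (K := K) b)
  have hq : 1 ≤ Fintype.card K := Fintype.card_pos
  simp only [Nat.cast_mul, Nat.cast_prod, cast_prodPowSubOne hq, prod_pow_eq_pow_sum,
    sum_card_fiber_eq_card] at h
  rw [← ZMod.natCast_eq_natCast_iff, Nat.cast_one]
  exact ((isUnit_one.neg).pow _).mul_right_cancel (by rw [h, one_mul])

end GeneralLinearGroup

end Matrix

theorem parabolic_index_modeq_one_general
    (Fq : Type*) [Field Fq] [Fintype Fq] (q : ℕ) (hq : q = Fintype.card Fq)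
    (r : ℕ) (μ : Fin r → ℕ) :
    ∃ H : Subgroup (GL (Fin r) Fq),
      (H : Set (GL (Fin r) Fq)) =
        {g : GL (Fin r) Fq | ∀ i j, μ j > μ i → (g : Matrix (Fin r) (Fin r) Fq) i j = 0} ∧
      H.index ≡ 1 [MOD q] :=
  -- `BlockTriangular (toDual ∘ μ)` unfolds to `μ i < μ j → g i j = 0`.
  ⟨Matrix.GeneralLinearGroup.blockTriangular (OrderDual.toDual ∘ μ) Fq, rfl,
    hq ▸ Matrix.GeneralLinearGroup.index_blockTriangular_modEq_one _⟩

/-- parabolic index claim in the proof of Lemma 14.5: the set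
`P = {g ∈ GL_r(𝔽_q) : g_{ij} = 0 whenever μ(j) > μ(i)}` is a subgroup of `GL_r(𝔽_q)`
whose index is congruent to `1` modulo `q`. -/
theorem parabolic_index_modeq_one
    (Fq : Type*) [Field Fq] [Fintype Fq] (q : ℕ) (hq : q = Fintype.card Fq)
    (r : ℕ) (hr : 1 ≤ r) (μ : Fin r → ℕ) :
    ∃ H : Subgroup (GL (Fin r) Fq),
      (H : Set (GL (Fin r) Fq)) =
        {g : GL (Fin r) Fq | ∀ i j, μ j > μ i → (g : Matrix (Fin r) (Fin r) Fq) i j = 0} ∧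
      H.index ≡ 1 [MOD q] :=
  parabolic_index_modeq_one_general Fq q hq r μ
end

section
/- For every γ ∈ GL_r(F), the module Lγ is again a finitely generated A-submodule of F^r spanning F^r and strongly discrete as a subgroup of F_∞^r, and for every integer k ≥ 0 and every ω ∈ Ω^r one has j(γ,ω)^{−(q^k−1)}·g^L_{N,k}(γ(ω)) = g^{Lγ}_{N,k}(ω), i.e. g^L_{N,k}|_{q^k−1} γ = g^{Lγ}_{N,k}, where g^{Lγ}_{N,k} is defined using the lattice Lγ and the same element N*. (Proposition 15.3(a).) -/
/-!
Right multiplication by `γ` is an `F`-linear automorphism of `F^r`; it transports every property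
of `L` to `Lγ` and carries representatives of `N⁻¹L / L` to representatives of `N⁻¹(Lγ) / Lγ`.
Since `x·γ(ω) = j(γ,ω)⁻¹ · (xγ)ω`, the lattice `L·γ(ω)` is `j⁻¹ · (Lγ)ω`, hence
`e_{L·γ(ω)}(w·γ(ω)) = j⁻¹ · e_{(Lγ)ω}((wγ)ω)`. As `e_Λ` is `Λ`-periodic, the factors of
`ψ^{L·γ(ω)}_N` are those of `ψ^{(Lγ)ω}_N` with `X` replaced by `jX`, which multiplies the
coefficient of `X^{q^k}` by `j^{q^k - 1}`.

Periodicity of `e_Λ`: in the ultrametric field `K` the sets `Λ ∩ closedBall 0 n` are finite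
subgroups exhausting `Λ`, and for a finite subgroup `V` the partial product
`z ∏_{v ∈ V, v ≠ 0} (1 - z/v)` is a constant multiple of `∏_{v ∈ V} (z - v)`.
-/

open scoped BigOperators

/-- The exponential function `e_Λ(z) = z·∏_{λ ∈ Λ, λ ≠ 0} (1 - z/λ)` of a subset `Λ ⊆ K`. -/
noncomputable def expF {K : Type*} [NormedField K] (Λ : Set K) (z : K) : K :=
  z * ∏' l : {l : K // l ∈ Λ ∧ l ≠ 0}, (1 - z / (l : K))

/-- `a⁻¹L = {x : a•x ∈ L}`. -/
def invSc {K : Type*} [Field K] {r : ℕ} (a : K) (L : Set (Fin r → K)) : Set (Fin r → K) :=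
  {x | a • x ∈ L}

/-- `N⁻¹L = {x : b•x ∈ L for all b ∈ N}`, for an ideal `N` of a subring `A ⊆ K`. -/
def invIdl {K : Type*} [Field K] {A : Subring K} {r : ℕ} (N : Ideal A)
    (L : Set (Fin r → K)) : Set (Fin r → K) :=
  {x | ∀ b : A, b ∈ N → (b : K) • x ∈ L}

/-- `R` contains exactly one element of each coset of `L` in `S` other than `L` itself. -/
def IsRepSet {K : Type*} [Field K] {r : ℕ} (L S : Set (Fin r → K))
    (R : Finset (Fin r → K)) : Prop :=
  (R : Set (Fin r → K)) ⊆ S \ L ∧ ∀ x ∈ S, x ∉ L → ∃! y, y ∈ R ∧ x - y ∈ L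

/-- The discriminant value `a · ∏_{w ∈ R} e_{Lω}(wω)⁻¹`. -/
noncomputable def discVal {K : Type*} [NormedField K] {r : ℕ} (a : K)
    (L : Set (Fin r → K)) (R : Finset (Fin r → K)) (ω : Fin r → K) : K :=
  a * ∏ w ∈ R, (expF ((fun x => rvPair x ω) '' L) (rvPair w ω))⁻¹

/-- The last index of `Fin r`. -/
def lastIdx (r : ℕ) (hr : 0 < r) : Fin r := ⟨r - 1, by omega⟩

/-- The factor of automorphy `j(γ,ω) = ξ⁻¹ · (last entry of γω)`. -/
noncomputable def jfac {K : Type*} [Field K] {r : ℕ} (hr : 0 < r) (ξ : K)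
    (γ : Matrix (Fin r) (Fin r) K) (ω : Fin r → K) : K :=
  ξ⁻¹ * (γ.mulVec ω) (lastIdx r hr)

/-- The action `γ(ω) = j(γ,ω)⁻¹ · γω`. -/
noncomputable def actOmega {K : Type*} [Field K] {r : ℕ} (hr : 0 < r) (ξ : K)
    (γ : Matrix (Fin r) (Fin r) K) (ω : Fin r → K) : Fin r → K :=
  (jfac hr ξ γ ω)⁻¹ • γ.mulVec ω

/-- The Drinfeld period domain `Ω^r`. -/
def OmegaSet {K : Type*} [Field K] (r : ℕ) (hr : 0 < r) (Finf : Subfield K) (ξ : K) :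
    Set (Fin r → K) :=
  {ω | (∀ x : Fin r → K, (∀ i, x i ∈ Finf) → rvPair x ω = 0 → x = 0) ∧ ω (lastIdx r hr) = ξ}

/-- The coefficient form value `g^M_{N,k}(ω)`: the coefficient of `X^{q^k}` in
`ψ^{Mω}_N(X) = N*·X·∏_{w∈R}(1 − e_{Mω}(wω)⁻¹·X)`. -/
noncomputable def gCoef {K : Type*} [NormedField K] {r : ℕ} (M : Set (Fin r → K))
    (R : Finset (Fin r → K)) (Nstar : K) (q k : ℕ) (ω : Fin r → K) : K :=
  Polynomial.coeff (Polynomial.C Nstar * Polynomial.X *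
    ∏ w ∈ R, (1 - Polynomial.C ((expF ((fun x => rvPair x ω) '' M) (rvPair w ω))⁻¹) *
      Polynomial.X)) (q ^ k)

open Filter Topology Bornology

section Ultrametric

variable {K : Type*} [NormedField K] [IsUltrametricDist K] {ι : Type*}

lemma norm_prod_sub_one_le {f : ι → K} {s : Finset ι} {δ : ℝ} (hδ : 0 ≤ δ)
    (hf : ∀ i ∈ s, ‖f i‖ ≤ 1 ∧ ‖f i - 1‖ ≤ δ) : ‖∏ i ∈ s, f i - 1‖ ≤ δ := by
  classical
  induction s using Finset.induction_on with
  | empty => simpa using hδ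
  | insert a s ha ih =>
    obtain ⟨hfa, hfa'⟩ := hf a (Finset.mem_insert_self a s)
    have hs := ih fun i hi => hf i (Finset.mem_insert_of_mem hi)
    rw [Finset.prod_insert ha, show f a * ∏ i ∈ s, f i - 1 =
      f a * (∏ i ∈ s, f i - 1) + (f a - 1) by ring]
    refine (IsUltrametricDist.norm_add_le_max _ _).trans (max_le ?_ hfa')
    rw [norm_mul]
    nlinarith [norm_nonneg (f a), norm_nonneg (∏ i ∈ s, f i - 1)]

lemma norm_le_one_of_norm_sub_one_lt {x : K} (hx : ‖x - 1‖ < 1) : ‖x‖ ≤ 1 := by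
  simpa [hx.le] using IsUltrametricDist.norm_add_le_max (x - 1) 1

lemma multipliable_of_forall_norm_sub_one_lt [CompleteSpace K] {f : ι → K}
    (hf : Tendsto f cofinite (𝓝 1)) (hf1 : ∀ i, ‖f i - 1‖ < 1) : Multipliable f := by
  classical
  refine cauchySeq_tendsto_of_complete (Metric.cauchySeq_iff'.mpr fun ε hε => ?_)
  have hfin : {i | ε / 2 ≤ ‖f i - 1‖}.Finite := by
    simpa [dist_eq_norm] using Metric.tendsto_nhds.mp hf (ε / 2) (half_pos hε)
  refine ⟨hfin.toFinset, fun t ht => ?_⟩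
  rw [dist_eq_norm, ← Finset.prod_sdiff ht, ← sub_one_mul, norm_mul]
  have htail : ‖∏ i ∈ t \ hfin.toFinset, f i - 1‖ ≤ ε / 2 :=
    norm_prod_sub_one_le (half_pos hε).le fun i hi => ⟨norm_le_one_of_norm_sub_one_lt (hf1 i),
      le_of_lt (by simpa using (Finset.mem_sdiff.mp hi).2)⟩
  have hhead : ‖∏ i ∈ hfin.toFinset, f i‖ ≤ 1 := by
    rw [norm_prod]
    exact Finset.prod_le_one (fun _ _ => norm_nonneg _)
      fun i _ => norm_le_one_of_norm_sub_one_lt (hf1 i)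
  nlinarith [norm_nonneg (∏ i ∈ t \ hfin.toFinset, f i - 1)]

/-- Away from the finitely many factors outside the unit ball around `1`, partial products form a
Cauchy net because the norm is ultrametric. -/
theorem IsUltrametricDist.multipliable_of_tendsto_cofinite_one [CompleteSpace K] {f : ι → K}
    (hf : Tendsto f cofinite (𝓝 1)) : Multipliable f := by
  set s : Set ι := {i | 1 ≤ ‖f i - 1‖}
  have hs : s.Finite := by
    simpa [s, dist_eq_norm] using Metric.tendsto_nhds.mp hf 1 one_pos
  have : Finite s := hs
  refine Multipliable.mul_compl (s := s) .of_finite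
    (multipliable_of_forall_norm_sub_one_lt (hf.comp ?_) fun i => not_le.mp i.2)
  exact Function.Injective.tendsto_cofinite Subtype.val_injective

end Ultrametric

lemma StronglyDiscrete.tendsto_cofinite_cobounded {E ι : Type*} [SeminormedAddCommGroup E]
    {M : Set E} (hM : StronglyDiscrete M) {f : ι → E} (hf : Function.Injective f)
    (hfM : ∀ i, f i ∈ M) : Tendsto f cofinite (cobounded E) := by
  intro U hU
  rw [mem_map, mem_cofinite, ← Set.preimage_compl]
  have hUc : IsBounded Uᶜ := isBounded_def.mpr (by rwa [compl_compl])
  exact ((hM _ hUc).preimage hf.injOn).subset fun i hi => ⟨hfM i, hi⟩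

lemma StronglyDiscrete.image_of_leftInverse {E E' : Type*} [SeminormedAddCommGroup E]
    [SeminormedAddCommGroup E'] {M : Set E} (hM : StronglyDiscrete M) {f : E → E'} {g : E' → E}
    {C : NNReal} (hg : LipschitzWith C g) (hgf : Function.LeftInverse g f) :
    StronglyDiscrete (f '' M) := by
  intro B hB
  refine ((hM _ (hg.isBounded_image hB)).image f).subset ?_
  rintro _ ⟨⟨x, hx, rfl⟩, hxB⟩
  exact ⟨x, ⟨hx, f x, hxB, hgf x⟩, rfl⟩

section Exponential

variable {K : Type*} [NormedField K]

lemma tendsto_one_sub_div_cofinite {Λ : Set K} (hΛ : StronglyDiscrete Λ) (z : K) :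
    Tendsto (fun l : {l : K // l ∈ Λ ∧ l ≠ 0} => 1 - z / (l : K)) cofinite (𝓝 1) := by
  have h := (tendsto_inv₀_cobounded.comp (hΛ.tendsto_cofinite_cobounded Subtype.val_injective
    fun l : {l : K // l ∈ Λ ∧ l ≠ 0} => l.2.1)).const_mul z
  simpa [div_eq_mul_inv] using (tendsto_const_nhds (x := (1 : K))).sub h

lemma expF_image_mul (Λ : Set K) {c : K} (hc : c ≠ 0) (z : K) :
    expF ((c * ·) '' Λ) (c * z) = c * expF Λ z := by
  let e : {l : K // l ∈ Λ ∧ l ≠ 0} ≃ {l : K // l ∈ (c * ·) '' Λ ∧ l ≠ 0} :=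
    (Equiv.mulLeft₀ c hc).subtypeEquiv fun l => by
      simp [(mul_right_injective₀ hc).mem_set_image, hc]
  rw [expF, expF, ← e.tprod_eq, mul_assoc]
  congr 2
  exact tprod_congr fun l => congrArg (1 - ·) (mul_div_mul_left z (l : K) hc)

lemma mul_prod_one_sub_div_eq [DecidableEq K] (V : Finset K) (hV : (0 : K) ∈ V) (z : K) :
    z * ∏ v ∈ V.erase 0, (1 - z / v) = (∏ v ∈ V.erase 0, -v)⁻¹ * ∏ v ∈ V, (z - v) := by
  rw [← Finset.mul_prod_erase V _ hV, sub_zero, ← Finset.prod_inv_distrib, ← mul_assoc,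
    mul_comm _ z, mul_assoc, ← Finset.prod_mul_distrib]
  congr 1
  refine Finset.prod_congr rfl fun v hv => ?_
  have : v ≠ 0 := Finset.ne_of_mem_erase hv
  field_simp
  ring

lemma mul_prod_one_sub_div_add [DecidableEq K] (V : Finset K) (hV : (0 : K) ∈ V) {l : K}
    (hadd : ∀ v ∈ V, v + l ∈ V) (hsub : ∀ v ∈ V, v - l ∈ V) (z : K) :
    (z + l) * ∏ v ∈ V.erase 0, (1 - (z + l) / v) = z * ∏ v ∈ V.erase 0, (1 - z / v) := by
  rw [mul_prod_one_sub_div_eq V hV, mul_prod_one_sub_div_eq V hV]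
  congr 1
  exact Finset.prod_nbij' (· - l) (· + l) hsub hadd (fun v _ => sub_add_cancel v l)
    (fun v _ => add_sub_cancel_right v l) fun v _ => by ring

variable [IsUltrametricDist K] [CompleteSpace K]

lemma tendsto_mul_prod_one_sub_div [DecidableEq K] {Λ : Set K} (hΛ : StronglyDiscrete Λ)
    (z : K) {V : ℕ → Finset K} (hVΛ : ∀ n, ↑(V n) ⊆ Λ)
    (hV : ∀ s : Finset K, ↑s ⊆ Λ → ∀ᶠ n in atTop, s ⊆ V n) :
    Tendsto (fun n => z * ∏ v ∈ (V n).erase 0, (1 - z / v)) atTop (𝓝 (expF Λ z)) := by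
  classical
  set p : K → Prop := fun l => l ∈ Λ ∧ l ≠ 0
  have hT : Tendsto (fun n => ((V n).erase 0).subtype p) atTop atTop := by
    refine tendsto_atTop_atTop.mpr fun s => ?_
    obtain ⟨N, hN⟩ := (hV (s.map (Function.Embedding.subtype p))
      fun _ hv => by obtain ⟨l, -, rfl⟩ := Finset.mem_map.mp hv; exact l.2.1).exists_forall_of_atTop
    refine ⟨N, fun n hn l hl => Finset.mem_subtype.mpr (Finset.mem_erase.mpr ⟨l.2.2, ?_⟩)⟩
    exact hN n hn (Finset.mem_map_of_mem _ hl)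
  have hprod : ∀ n, ∏ i ∈ ((V n).erase 0).subtype p, (1 - z / (i : K)) =
      ∏ v ∈ (V n).erase 0, (1 - z / v) := fun n =>
    Finset.prod_subtype_of_mem (fun v => 1 - z / v) fun v hv =>
      ⟨hVΛ n (Finset.mem_of_mem_erase hv), Finset.ne_of_mem_erase hv⟩
  exact (((IsUltrametricDist.multipliable_of_tendsto_cofinite_one
    (tendsto_one_sub_div_cofinite hΛ z)).hasProd.comp hT).const_mul z).congr
    fun n => congrArg (z * ·) (hprod n)

theorem expF_add_of_mem (Λ : AddSubgroup K) (hΛ : StronglyDiscrete (Λ : Set K)) {l : K}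
    (hl : l ∈ Λ) (z : K) : expF Λ (z + l) = expF Λ z := by
  classical
  set V : ℕ → Finset K := fun n => (hΛ _ (Metric.isBounded_closedBall (x := 0) (r := n))).toFinset
  have hmemV : ∀ {v n}, v ∈ V n ↔ v ∈ Λ ∧ ‖v‖ ≤ n := by simp [V]
  have hVΛ : ∀ n, ↑(V n) ⊆ (Λ : Set K) := fun n v hv => (hmemV.mp hv).1
  have hV : ∀ s : Finset K, ↑s ⊆ (Λ : Set K) → ∀ᶠ n in atTop, s ⊆ V n := fun s hs => by
    filter_upwards [eventually_ge_atTop ⌈∑ v ∈ s, ‖v‖⌉₊] with n hn v hv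
    exact hmemV.mpr ⟨hs hv, (Finset.single_le_sum (fun w _ => norm_nonneg w) hv).trans
      ((Nat.ceil_le).mp hn)⟩
  have hadd : ∀ (n : ℕ) w, w ∈ Λ → ‖w‖ ≤ n → ∀ v ∈ V n, v + w ∈ V n := fun n w hw hwn v hv =>
    hmemV.mpr ⟨Λ.add_mem (hmemV.mp hv).1 hw,
      (IsUltrametricDist.norm_add_le_max v w).trans (max_le (hmemV.mp hv).2 hwn)⟩
  refine tendsto_nhds_unique_of_eventuallyEq (tendsto_mul_prod_one_sub_div hΛ (z + l) hVΛ hV)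
    (tendsto_mul_prod_one_sub_div hΛ z hVΛ hV) ?_
  filter_upwards [eventually_ge_atTop ⌈‖l‖⌉₊] with n hn
  have hln : ‖l‖ ≤ n := Nat.ceil_le.mp hn
  refine mul_prod_one_sub_div_add _ (hmemV.mpr ⟨Λ.zero_mem, by simp⟩) (hadd n l hl hln)
    (fun v hv => ?_) z
  simpa [sub_eq_add_neg] using hadd n (-l) (Λ.neg_mem hl) (by rwa [norm_neg]) v hv

end Exponential

section Pairing

variable {K : Type*} [NormedField K] {r : ℕ}

/-- With `‖w‖ > 1` the closed subfield `Finf` is a complete nontrivially normed field, so the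
injective `Finf`-linear map `x ↦ xω` is antilipschitz. -/
lemma exists_norm_le_mul_norm_rvPair [CompleteSpace K] (Finf : Subfield K)
    (hclosed : IsClosed (Finf : Set K)) {w : K} (hwF : w ∈ Finf) (hw : 1 < ‖w‖)
    {ω : Fin r → K} (hω : ∀ x : Fin r → K, (∀ i, x i ∈ Finf) → rvPair x ω = 0 → x = 0) :
    ∃ C : NNReal, ∀ x : Fin r → K, (∀ i, x i ∈ Finf) → ‖x‖ ≤ C * ‖rvPair x ω‖ := by
  let _ : NontriviallyNormedField Finf := { non_trivial := ⟨⟨w, hwF⟩, hw⟩ }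
  have _ : CompleteSpace Finf := hclosed.completeSpace_coe
  let _ : NormedSpace Finf K := { norm_smul_le := fun c x => (norm_mul (c : K) x).le }
  set T := Fintype.linearCombination Finf ω
  have hT : ∀ v : Fin r → Finf, T v = rvPair (fun i => (v i : K)) ω := fun v => by
    simp [T, Fintype.linearCombination_apply, rvPair, Subfield.smul_def]
  have hker : LinearMap.ker T = ⊥ := LinearMap.ker_eq_bot'.mpr fun v hv => funext fun i =>
    Subtype.ext (congrFun (hω _ (fun i => (v i).2) ((hT v).symm.trans hv)) i)
  obtain ⟨C, -, hC⟩ := T.exists_antilipschitzWith hker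
  refine ⟨C, fun x hx => ?_⟩
  set v : Fin r → Finf := fun i => ⟨x i, hx i⟩
  have hv : ‖v‖ ≤ C * ‖rvPair x ω‖ := by
    have := hC.le_mul_dist v 0
    rwa [map_zero, dist_zero_right, dist_zero_right, hT] at this
  exact (pi_norm_le_iff_of_nonneg ((norm_nonneg v).trans hv)).mpr
    fun i => (norm_le_pi_norm v i).trans hv

theorem StronglyDiscrete.image_rvPair [CompleteSpace K] (Finf : Subfield K)
    (hclosed : IsClosed (Finf : Set K)) {ω : Fin r → K}
    (hω : ∀ x : Fin r → K, (∀ i, x i ∈ Finf) → rvPair x ω = 0 → x = 0)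
    {M : Set (Fin r → K)} (hM : StronglyDiscrete M) (hMF : ∀ x ∈ M, ∀ i, x i ∈ Finf) :
    StronglyDiscrete ((fun x => rvPair x ω) '' M) := by
  intro B hB
  by_cases hbig : ∃ w ∈ Finf, 1 < ‖w‖
  · obtain ⟨w, hwF, hw⟩ := hbig
    obtain ⟨C, hC⟩ := exists_norm_le_mul_norm_rvPair Finf hclosed hwF hw hω
    obtain ⟨ρ, hρ⟩ := hB.exists_norm_le
    refine ((hM _ (Metric.isBounded_closedBall (x := 0) (r := C * ρ))).image
      (fun x => rvPair x ω)).subset ?_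
    rintro _ ⟨⟨x, hxM, rfl⟩, hxB⟩
    refine ⟨x, ⟨hxM, mem_closedBall_zero_iff.mpr ?_⟩, rfl⟩
    exact (hC x (hMF x hxM)).trans (mul_le_mul_of_nonneg_left (hρ _ hxB) C.2)
  · simp only [not_exists, not_and, not_lt] at hbig
    refine ((hM _ (Metric.isBounded_closedBall (x := 0) (r := 1))).image
      (fun x => rvPair x ω)).subset ?_
    rintro _ ⟨⟨x, hxM, rfl⟩, -⟩
    refine ⟨x, ⟨hxM, ?_⟩, rfl⟩
    rw [mem_closedBall_zero_iff]
    exact (pi_norm_le_iff_of_nonneg zero_le_one).mpr fun i => hbig _ (hMF x hxM i)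

end Pairing

section Matrix

variable {K : Type*} [Field K] {n : Type*} [Fintype n]

lemma Matrix.vecMul_apply_mem {S : Type*} [SetLike S K] [SubsemiringClass S K] (F : S)
    {x : n → K} {γ : Matrix n n K} (hx : ∀ i, x i ∈ F) (hγ : ∀ i j, γ i j ∈ F) (j : n) :
    Matrix.vecMul x γ j ∈ F :=
  sum_mem fun i _ => mul_mem (hx i) (hγ i j)

lemma Matrix.inv_apply_mem_subfield [DecidableEq n] (F : Subfield K) {γ : Matrix n n K}
    (hγ : ∀ i j, γ i j ∈ F) (i j : n) : γ⁻¹ i j ∈ F := by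
  obtain ⟨γ', rfl⟩ : ∃ γ' : Matrix n n F, F.subtype.mapMatrix γ' = γ :=
    ⟨Matrix.of fun i j => ⟨γ i j, hγ i j⟩, rfl⟩
  rw [Matrix.inv_def, ← RingHom.map_adjugate, ← RingHom.map_det, Ring.inverse_eq_inv',
    ← map_inv₀, Matrix.smul_apply, RingHom.mapMatrix_apply, Matrix.map_apply, smul_eq_mul,
    ← map_mul]
  exact (γ'.det⁻¹ * γ'.adjugate i j).2

variable [DecidableEq n]

noncomputable def Matrix.vecMulEquiv (γ : Matrix n n K) (hγ : IsUnit γ.det) :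
    (n → K) ≃ₗ[K] (n → K) :=
  LinearEquiv.ofLinearMap (Matrix.vecMulLinear γ) (Matrix.vecMulLinear γ⁻¹)
    (LinearMap.ext fun x => by simp [Matrix.vecMul_vecMul, Matrix.nonsing_inv_mul _ hγ])
    (LinearMap.ext fun x => by simp [Matrix.vecMul_vecMul, Matrix.mul_nonsing_inv _ hγ])

end Matrix

section Image

variable {K V W : Type*} [Field K] [AddCommGroup V] [Module K V] [AddCommGroup W] [Module K W]

lemma smul_mem_image_of_smul_mem (φ : V →ₗ[K] W) {S : Set K} {L : Set V}
    (hL : ∀ c ∈ S, ∀ x ∈ L, c • x ∈ L) : ∀ c ∈ S, ∀ y ∈ φ '' L, c • y ∈ φ '' L := by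
  rintro c hc _ ⟨x, hx, rfl⟩
  exact ⟨c • x, hL c hc x hx, φ.map_smul c x⟩

lemma map_mem_closure_smul (φ : V →ₗ[K] W) {S : Set K} {T : Set V} {x : V}
    (hx : x ∈ AddSubgroup.closure {y | ∃ c ∈ S, ∃ t ∈ T, y = c • t}) :
    φ x ∈ AddSubgroup.closure {y | ∃ c ∈ S, ∃ t ∈ φ '' T, y = c • t} := by
  have := AddSubgroup.mem_map_of_mem φ.toAddMonoidHom hx
  rw [AddMonoidHom.map_closure] at this
  refine (AddSubgroup.closure_mono ?_) this
  rintro _ ⟨_, ⟨c, hc, t, ht, rfl⟩, rfl⟩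
  exact ⟨c, hc, φ t, ⟨t, ht, rfl⟩, φ.map_smul c t⟩

end Image

section RepresentativeSets

variable {K : Type*} [Field K] {r : ℕ}

/-- Both products run over the nonzero classes of `S / L`, pairing `w ∈ R` with the
representative in `R'` of its class. -/
lemma IsRepSet.prod_eq {M : Type*} [CommMonoid M] {L : AddSubgroup (Fin r → K)}
    {S : Set (Fin r → K)} {R R' : Finset (Fin r → K)} (hR : IsRepSet L S R)
    (hR' : IsRepSet L S R') {f : (Fin r → K) → M} (hf : ∀ x, ∀ l ∈ L, f (x + l) = f x) :
    ∏ w ∈ R, f w = ∏ y ∈ R', f y := by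
  choose! i hi using fun w (hw : w ∈ R) => (hR'.2 w (hR.1 hw).1 (hR.1 hw).2).exists
  refine Finset.prod_bij (fun w _ => i w) (fun w hw => (hi w hw).1) ?_ ?_ ?_
  · intro w₁ hw₁ w₂ hw₂ h
    have hw : w₁ - w₂ ∈ L := by
      simpa [h] using L.sub_mem (hi w₁ hw₁).2 (hi w₂ hw₂).2
    exact (hR.2 w₁ (hR.1 hw₁).1 (hR.1 hw₁).2).unique ⟨hw₁, by simp⟩ ⟨hw₂, hw⟩
  · intro y hy
    obtain ⟨w, ⟨hw, hyw⟩, -⟩ := hR.2 y (hR'.1 hy).1 (hR'.1 hy).2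
    refine ⟨w, hw, (hR'.2 w (hR.1 hw).1 (hR.1 hw).2).unique (hi w hw) ⟨hy, ?_⟩⟩
    simpa using L.neg_mem hyw
  · intro w hw
    simpa using hf (i w) _ (hi w hw).2

lemma IsRepSet.image {L S : Set (Fin r → K)} {R : Finset (Fin r → K)} (hR : IsRepSet L S R)
    (e : (Fin r → K) ≃ₗ[K] (Fin r → K)) :
    IsRepSet (e '' L) (e '' S) (R.map e.toEquiv.toEmbedding) := by
  refine ⟨?_, ?_⟩
  · rintro _ hy
    obtain ⟨w, hw, rfl⟩ := Finset.mem_map.mp hy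
    exact ⟨⟨w, (hR.1 hw).1, rfl⟩, e.injective.mem_set_image.not.mpr (hR.1 hw).2⟩
  · rintro _ ⟨x, hx, rfl⟩ hxL
    obtain ⟨w, ⟨hw, hxw⟩, huniq⟩ := hR.2 x hx (e.injective.mem_set_image.not.mp hxL)
    refine ⟨e w, ⟨Finset.mem_map_of_mem _ hw, ⟨x - w, hxw, map_sub e x w⟩⟩, ?_⟩
    rintro _ ⟨hy, hxy⟩
    obtain ⟨y, hyR, rfl⟩ := Finset.mem_map.mp hy
    have hxy' : e x - e y ∈ e '' L := hxy
    rw [← map_sub, e.injective.mem_set_image] at hxy'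
    exact congrArg e (huniq y ⟨hyR, hxy'⟩)

lemma invIdl_image {A : Subring K} (N : Ideal A) (L : Set (Fin r → K))
    (e : (Fin r → K) ≃ₗ[K] (Fin r → K)) : invIdl N (e '' L) = e '' invIdl N L := by
  ext x
  simp [invIdl, LinearEquiv.image_eq_preimage_symm]

end RepresentativeSets

section Slash

open Polynomial

lemma coeff_comp_C_mul_X {R : Type*} [CommSemiring R] (P : R[X]) (j : R) (m : ℕ) :
    (P.comp (C j * X)).coeff m = j ^ m * P.coeff m := by
  induction P using Polynomial.induction_on' with
  | add p q hp hq => simp [add_comp, hp, hq, mul_add]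
  | monomial n a =>
    rw [← C_mul_X_pow_eq_monomial, mul_comp, C_comp, pow_comp, X_comp, mul_pow, ← C_pow,
      ← mul_assoc, ← C_mul, coeff_C_mul_X_pow, coeff_C_mul, coeff_X_pow]
    split_ifs with h
    · subst h; ring
    · ring

lemma coeff_C_mul_X_mul_prod_one_sub_scale {K ι : Type*} [Field K] (s : Finset ι) (c : ι → K)
    (a j : K) (m : ℕ) :
    (C a * X * ∏ i ∈ s, (1 - C (j * c i) * X)).coeff m =
      j ^ ((m : ℤ) - 1) * (C a * X * ∏ i ∈ s, (1 - C (c i) * X)).coeff m := by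
  have hcomp : ∏ i ∈ s, (1 - C (j * c i) * X) = (∏ i ∈ s, (1 - C (c i) * X)).comp (C j * X) := by
    simp only [prod_comp, sub_comp, one_comp, mul_comp, C_comp, X_comp, ← mul_assoc, ← C_mul,
      mul_comm j]
  cases m with
  | zero => simp [mul_assoc]
  | succ m =>
    rw [hcomp, mul_assoc, mul_assoc, coeff_C_mul, coeff_C_mul, coeff_X_mul, coeff_X_mul,
      coeff_comp_C_mul_X]
    push_cast
    rw [add_sub_cancel_right, zpow_natCast]
    ring

variable {K : Type*} [NormedField K] {r : ℕ}

lemma rvPair_actOmega (hr : 0 < r) (ξ : K) (γ : Matrix (Fin r) (Fin r) K) (ω x : Fin r → K) :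
    rvPair x (actOmega hr ξ γ ω) = (jfac hr ξ γ ω)⁻¹ * rvPair (Matrix.vecMul x γ) ω := by
  change x ⬝ᵥ ((jfac hr ξ γ ω)⁻¹ • γ.mulVec ω) = _ * (Matrix.vecMul x γ ⬝ᵥ ω)
  rw [dotProduct_smul, Matrix.dotProduct_mulVec, smul_eq_mul]

lemma jfac_ne_zero (hr : 0 < r) {ξ : K} (hξ : ξ ≠ 0) (Finf : Subfield K)
    {γ : Matrix (Fin r) (Fin r) K} (hγ : ∀ i j, γ i j ∈ Finf) (hdet : γ.det ≠ 0) {ω : Fin r → K}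
    (hω : ∀ x : Fin r → K, (∀ i, x i ∈ Finf) → rvPair x ω = 0 → x = 0) :
    jfac hr ξ γ ω ≠ 0 :=
  mul_ne_zero (inv_ne_zero hξ) fun h => hdet <| Matrix.det_eq_zero_of_row_eq_zero (lastIdx r hr)
    fun j => congrFun (hω (γ (lastIdx r hr)) (hγ _) h) j

theorem gCoef_actOmega [IsUltrametricDist K] [CompleteSpace K] (hr : 0 < r) (ξ : K)
    {γ : Matrix (Fin r) (Fin r) K} (hγ : IsUnit γ.det) {ω : Fin r → K}
    (hj : jfac hr ξ γ ω ≠ 0) (L : AddSubgroup (Fin r → K))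
    (hdisc : StronglyDiscrete ((fun x => rvPair x ω) '' ((fun x => Matrix.vecMul x γ) '' L)))
    {A : Subring K} (N : Ideal A) {R R' : Finset (Fin r → K)} (hR : IsRepSet L (invIdl N L) R)
    (hR' : IsRepSet ((fun x => Matrix.vecMul x γ) '' L)
      (invIdl N ((fun x => Matrix.vecMul x γ) '' L)) R') (Nstar : K) (q k : ℕ) :
    jfac hr ξ γ ω ^ (-((q : ℤ) ^ k - 1)) * gCoef L R Nstar q k (actOmega hr ξ γ ω) =
      gCoef ((fun x => Matrix.vecMul x γ) '' L) R' Nstar q k ω := by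
  set j := jfac hr ξ γ ω
  set e := Matrix.vecMulEquiv γ hγ
  let π : (Fin r → K) →+ K := AddMonoidHom.mk' (rvPair · ω) fun x y => add_dotProduct x y ω
  set Λ : AddSubgroup K := (L.map e.toLinearMap.toAddMonoidHom).map π
  set E : (Fin r → K) → K := fun y => (expF Λ (rvPair y ω))⁻¹
  have hscale : (fun x => rvPair x (actOmega hr ξ γ ω)) '' (L : Set (Fin r → K)) =
      (j⁻¹ * ·) '' (Λ : Set K) := by
    simp only [rvPair_actOmega, Λ, AddSubgroup.coe_map, Set.image_image]
    rfl
  have hfactor : ∀ w, (expF ((fun x => rvPair x (actOmega hr ξ γ ω)) '' L)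
      (rvPair w (actOmega hr ξ γ ω)))⁻¹ = j * E (e w) := fun w => by
    rw [hscale, rvPair_actOmega, expF_image_mul _ (inv_ne_zero hj), mul_inv, inv_inv]
    rfl
  have hperiodic : ∀ y, ∀ l ∈ L.map e.toLinearMap.toAddMonoidHom, E (y + l) = E y :=
    fun y l hl => by
      simp only [E, show rvPair (y + l) ω = rvPair y ω + π l from add_dotProduct y l ω]
      rw [expF_add_of_mem Λ hdisc (AddSubgroup.mem_map_of_mem π hl)]
  have hR'' : IsRepSet (L.map e.toLinearMap.toAddMonoidHom)
      (invIdl N (L.map e.toLinearMap.toAddMonoidHom)) (R.map e.toEquiv.toEmbedding) := by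
    have := hR.image e
    rw [← invIdl_image] at this
    exact this
  have hprod : ∏ w ∈ R, (1 - C ((expF ((fun x => rvPair x (actOmega hr ξ γ ω)) '' L)
      (rvPair w (actOmega hr ξ γ ω)))⁻¹) * X) = ∏ y ∈ R', (1 - C (j * E y) * X) := by
    simp only [hfactor]
    refine Eq.trans ?_ (hR''.prod_eq hR' fun y l hl => by rw [hperiodic y l hl])
    rw [Finset.prod_map]
    rfl
  rw [gCoef, hprod, coeff_C_mul_X_mul_prod_one_sub_scale, ← mul_assoc, ← zpow_add₀ hj]
  push_cast
  rw [neg_add_cancel, zpow_zero, one_mul]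
  rfl

end Slash

/-- Proposition 15.3(a): `g^L_{N,k}|_{q^k−1} γ = g^{Lγ}_{N,k}`, and `Lγ`
is again a finitely generated `A`-submodule of `F^r` spanning `F^r` and strongly
discrete. -/
theorem coefficient_form_slash
    (K : Type*) [NontriviallyNormedField K] [IsUltrametricDist K] [CompleteSpace K]
    (Finf : Subfield K) (hFinfclosed : IsClosed (Finf : Set K))
    (ξ : K) (hξ : ξ ≠ 0)
    (q : ℕ)
    (A : Subring K)
    (F : Subfield K) (hFFinf : F ≤ Finf)
    (r : ℕ) (hr : 2 ≤ r)
    (L : Set (Fin r → K))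
    (hLsub : ∃ G : AddSubgroup (Fin r → K), (G : Set (Fin r → K)) = L)
    (hLF : ∀ x ∈ L, ∀ i, x i ∈ F)
    (hLA : ∀ a ∈ (A : Set K), ∀ x ∈ L, a • x ∈ L)
    (hLfg : ∃ T : Finset (Fin r → K), (T : Set (Fin r → K)) ⊆ L ∧
      ∀ x ∈ L, x ∈ AddSubgroup.closure
        {y | ∃ a ∈ (A : Set K), ∃ t ∈ (T : Set (Fin r → K)), y = a • t})
    (hLspan : ∀ y : Fin r → K, (∀ i, y i ∈ F) →
      y ∈ AddSubgroup.closure {z | ∃ c ∈ (F : Set K), ∃ x ∈ L, z = c • x})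
    (hLdisc : StronglyDiscrete L)
    (N : Ideal A)
    (a : A)
    (Nstar : K)
    (γ : Matrix (Fin r) (Fin r) K) (hγF : ∀ i j, γ i j ∈ F) (hγdet : γ.det ≠ 0) :
    -- `Lγ` is again a finitely generated `A`-submodule of `F^r` spanning `F^r`,
    -- strongly discrete in `F_∞^r`
    (∃ G : AddSubgroup (Fin r → K),
        (G : Set (Fin r → K)) = (fun x => Matrix.vecMul x γ) '' L) ∧
    (∀ x ∈ (fun x => Matrix.vecMul x γ) '' L, ∀ i, x i ∈ F) ∧
    (∀ a' ∈ (A : Set K), ∀ x ∈ (fun x => Matrix.vecMul x γ) '' L,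
      a' • x ∈ (fun x => Matrix.vecMul x γ) '' L) ∧
    (∃ T : Finset (Fin r → K), (T : Set (Fin r → K)) ⊆ (fun x => Matrix.vecMul x γ) '' L ∧
      ∀ x ∈ (fun x => Matrix.vecMul x γ) '' L, x ∈ AddSubgroup.closure
        {y | ∃ a' ∈ (A : Set K), ∃ t ∈ (T : Set (Fin r → K)), y = a' • t}) ∧
    (∀ y : Fin r → K, (∀ i, y i ∈ F) →
      y ∈ AddSubgroup.closure
        {z | ∃ c' ∈ (F : Set K), ∃ x ∈ (fun x => Matrix.vecMul x γ) '' L, z = c' • x}) ∧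
    StronglyDiscrete ((fun x => Matrix.vecMul x γ) '' L) ∧
    -- the slash equivariance `g^L_{N,k}|_{q^k−1} γ = g^{Lγ}_{N,k}`
    (∀ (k : ℕ) (R R' : Finset (Fin r → K)),
      IsRepSet L (invIdl N L) R →
      IsRepSet ((fun x => Matrix.vecMul x γ) '' L)
        (invIdl N ((fun x => Matrix.vecMul x γ) '' L)) R' →
      ∀ ω ∈ OmegaSet r (by omega) Finf ξ,
        (jfac (by omega : 0 < r) ξ γ ω) ^ (-((q : ℤ) ^ k - 1)) *
            gCoef L R Nstar q k (actOmega (by omega) ξ γ ω) =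
          gCoef ((fun x => Matrix.vecMul x γ) '' L) R' Nstar q k ω) := by
  obtain ⟨G, rfl⟩ := hLsub
  have hγ : IsUnit γ.det := isUnit_iff_ne_zero.mpr hγdet
  set e := Matrix.vecMulEquiv γ hγ
  have hLγF : ∀ x ∈ e '' G, ∀ i, x i ∈ F := by
    rintro _ ⟨x, hx, rfl⟩
    exact Matrix.vecMul_apply_mem F (hLF x hx) hγF
  have hLγdisc : StronglyDiscrete (e '' G) :=
    hLdisc.image_of_leftInverse (LinearMap.toContinuousLinearMap e.symm.toLinearMap).lipschitz
      e.symm_apply_apply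
  refine ⟨⟨G.map e.toLinearMap.toAddMonoidHom, rfl⟩, hLγF,
    smul_mem_image_of_smul_mem e.toLinearMap hLA, ?_, fun y hy => ?_, hLγdisc, ?_⟩
  · obtain ⟨T, hTG, hT⟩ := hLfg
    refine ⟨T.map e.toEquiv.toEmbedding, ?_, ?_⟩
    · rw [Finset.coe_map]
      exact Set.image_mono hTG
    · rintro _ ⟨x, hx, rfl⟩
      rw [Finset.coe_map]
      exact map_mem_closure_smul e.toLinearMap (hT x hx)
  · have := map_mem_closure_smul e.toLinearMap (hLspan (e.symm y)
      (Matrix.vecMul_apply_mem F hy (Matrix.inv_apply_mem_subfield F hγF)))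
    rwa [LinearEquiv.coe_coe, e.apply_symm_apply] at this
  · intro k R R' hR hR' ω hω
    exact gCoef_actOmega _ ξ hγ (jfac_ne_zero _ hξ Finf (fun i j => hFFinf (hγF i j)) hγdet hω.1)
      G (hLγdisc.image_rvPair Finf hFinfclosed hω.1 fun x hx i => hFFinf (hLγF x hx i)) N hR hR'
      Nstar q k
end
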